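/- Suppose the partition has spectral gap at least Λ > 0, and let ω > 0 and α > 0 be such that γ = ((1+α)/α)·(ω/Λ) < 1. Then for every f ∈ PW_ω(L), ((1−γ)/(1+α))·‖f‖² ≤ ∑_j |⟨f, ξ_j⟩|² ≤ ‖f‖². -/

import Mathlib

/-!
On each part `Ω j`, split `f` into its mean and a mean-zero remainder. By Pythagoras the means
contribute exactly the frame sum `A`, so `‖f‖² = A + R` with `R` the energy of the remainders.
The spectral gap bounds `Λ R` by the Dirichlet energy of `f` inside the parts, which is at most
the full Dirichlet energy `⟪L f, f⟫`; for `f ∈ PW_ω(L)` this is at most `ω ‖f‖²`, by expanding `f`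
in an orthonormal eigenbasis of `L`. Hence `A ≥ (1 - ω / Λ) ‖f‖²`, which dominates the lower bound.
-/

open Finset Module.End
open scoped InnerProductSpace ComplexConjugate

section Variance

variable {𝕜 ι E : Type*} [RCLike 𝕜] [NormedAddCommGroup E] [InnerProductSpace 𝕜 E]

theorem Finset.sum_sub_inv_card_smul_sum_eq_zero (s : Finset ι) (x : ι → E) :
    ∑ i ∈ s, (x i - (#s : 𝕜)⁻¹ • ∑ j ∈ s, x j) = 0 := by
  rcases s.eq_empty_or_nonempty with rfl | hs
  · simp
  have hcard : (#s : 𝕜) ≠ 0 := by exact_mod_cast hs.card_pos.ne'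
  rw [sum_sub_distrib, sum_const, ← Nat.cast_smul_eq_nsmul 𝕜, smul_inv_smul₀ hcard, sub_self]

theorem Finset.sum_norm_sq_eq_inv_card_mul_norm_sum_sq_add (s : Finset ι) (x : ι → E) :
    ∑ i ∈ s, ‖x i‖ ^ 2 = (#s : ℝ)⁻¹ * ‖∑ i ∈ s, x i‖ ^ 2 +
      ∑ i ∈ s, ‖x i - (#s : 𝕜)⁻¹ • ∑ j ∈ s, x j‖ ^ 2 := by
  set m := (#s : 𝕜)⁻¹ • ∑ j ∈ s, x j
  have hcross : ∑ i ∈ s, RCLike.re ⟪m, x i - m⟫_𝕜 = 0 := by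
    rw [← map_sum, ← inner_sum, s.sum_sub_inv_card_smul_sum_eq_zero, inner_zero_right, map_zero]
  have hmean : #s * ‖m‖ ^ 2 = (#s : ℝ)⁻¹ * ‖∑ i ∈ s, x i‖ ^ 2 := by
    rw [norm_smul, norm_inv, RCLike.norm_natCast, mul_pow]
    rcases Nat.eq_zero_or_pos #s with h | h
    · simp [h]
    · field_simp
  calc ∑ i ∈ s, ‖x i‖ ^ 2 = ∑ i ∈ s, ‖m + (x i - m)‖ ^ 2 := by simp
    _ = #s * ‖m‖ ^ 2 + 2 * ∑ i ∈ s, RCLike.re ⟪m, x i - m⟫_𝕜 + ∑ i ∈ s, ‖x i - m‖ ^ 2 := by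
      simp only [@norm_add_sq 𝕜, sum_add_distrib, sum_const, nsmul_eq_mul, mul_sum]
    _ = _ := by rw [hcross, hmean, mul_zero, add_zero]

theorem Finset.mul_sum_norm_sq_sub_inv_card_smul_sum_le {w : ι → ι → ℝ} {s : Finset ι} {Λ : ℝ}
    (hgap : ∀ g : ι → 𝕜, ∑ v ∈ s, g v = 0 →
      Λ * ∑ v ∈ s, ‖g v‖ ^ 2 ≤ 1 / 2 * ∑ u ∈ s, ∑ v ∈ s, ‖g u - g v‖ ^ 2 * w u v)
    (f : ι → 𝕜) :
    Λ * ∑ v ∈ s, ‖f v - (#s : 𝕜)⁻¹ • ∑ u ∈ s, f u‖ ^ 2 ≤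
      1 / 2 * ∑ u ∈ s, ∑ v ∈ s, ‖f u - f v‖ ^ 2 * w u v := by
  simpa only [sub_sub_sub_cancel_right] using hgap _ (s.sum_sub_inv_card_smul_sum_eq_zero f)

end Variance

namespace LinearMap.IsSymmetric

variable {𝕜 E : Type*} [RCLike 𝕜] [NormedAddCommGroup E] [InnerProductSpace 𝕜 E]
  {T : E →ₗ[𝕜] E}

theorem inner_eq_zero_of_apply_eq_smul (hT : T.IsSymmetric) {μ ν : ℝ} {x y : E}
    (hx : T x = (μ : 𝕜) • x) (hy : T y = (ν : 𝕜) • y) (hμν : μ ≠ ν) : ⟪x, y⟫_𝕜 = 0 :=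
  hT.orthogonalFamily_eigenspaces (by exact_mod_cast hμν)
    ⟨x, mem_eigenspace_iff.2 hx⟩ ⟨y, mem_eigenspace_iff.2 hy⟩

theorem re_inner_map_self_le_of_mem_span [FiniteDimensional 𝕜 E] (hT : T.IsSymmetric)
    {ω : ℝ} {x : E} (hx : x ∈ Submodule.span 𝕜 {y | ∃ c : ℝ, c ≤ ω ∧ T y = (c : 𝕜) • y}) :
    RCLike.re ⟪T x, x⟫_𝕜 ≤ ω * ‖x‖ ^ 2 := by
  set b := hT.eigenvectorBasis rfl
  set μ := hT.eigenvalues rfl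
  have hperp : ∀ i, ω < μ i → ⟪b i, x⟫_𝕜 = 0 := by
    have hle : Submodule.span 𝕜 {y | ∃ c : ℝ, c ≤ ω ∧ T y = (c : 𝕜) • y} ≤
        ⨅ i, ⨅ (_ : ω < μ i), (𝕜 ∙ b i)ᗮ := by
      refine Submodule.span_le.2 fun y ⟨c, hc, hy⟩ => ?_
      simp only [SetLike.mem_coe, Submodule.mem_iInf,
        Submodule.mem_orthogonal_singleton_iff_inner_right]
      exact fun i hi => hT.inner_eq_zero_of_apply_eq_smul (hT.apply_eigenvectorBasis rfl i) hy
        (by linarith)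
    simpa only [Submodule.mem_iInf, Submodule.mem_orthogonal_singleton_iff_inner_right] using hle hx
  have hrayleigh : ⟪T x, x⟫_𝕜 = ∑ i, (μ i : 𝕜) * (‖⟪b i, x⟫_𝕜‖ ^ 2 : ℝ) := by
    rw [← b.sum_inner_mul_inner]
    refine sum_congr rfl fun i _ => ?_
    rw [hT, hT.apply_eigenvectorBasis, inner_smul_right, ← inner_conj_symm, mul_assoc,
      RCLike.conj_mul]
    push_cast; rfl
  rw [hrayleigh, ← b.sum_sq_norm_inner_right, mul_sum, map_sum]
  refine sum_le_sum fun i _ => ?_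
  rw [← RCLike.ofReal_mul, RCLike.ofReal_re]
  rcases le_or_gt (μ i) ω with h | h
  · exact mul_le_mul_of_nonneg_right h (sq_nonneg _)
  · simp [hperp i h]

end LinearMap.IsSymmetric

section Partition

variable {V J : Type*} [Fintype V] [Fintype J]

theorem Finset.sum_eq_sum_sum_of_partition {M : Type*} [AddCommMonoid M] {Ω : J → Finset V}
    (hdisj : ∀ i j, i ≠ j → Disjoint (Ω i) (Ω j)) (hcover : ∀ v, ∃ j, v ∈ Ω j) (h : V → M) :
    ∑ v, h v = ∑ j, ∑ v ∈ Ω j, h v := by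
  classical
  have huniv : univ.biUnion Ω = univ := eq_univ_of_forall fun v => by simpa using hcover v
  rw [← sum_biUnion fun i _ j _ hij => hdisj i j hij, huniv]

end Partition

section WeightedLaplacian

variable {𝕜 V : Type*} [RCLike 𝕜] [Fintype V]

noncomputable def weightedLaplacian (w : V → V → ℝ) :
    EuclideanSpace 𝕜 V →ₗ[𝕜] EuclideanSpace 𝕜 V where
  toFun f := WithLp.toLp 2 fun u => ∑ v, (f u - f v) * (w u v : 𝕜)
  map_add' f g := by
    ext u
    simp only [PiLp.add_apply, ← sum_add_distrib]
    exact sum_congr rfl fun v _ => by ring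
  map_smul' c f := by
    ext u
    simp only [PiLp.smul_apply, smul_eq_mul, RingHom.id_apply, mul_sum]
    exact sum_congr rfl fun v _ => by ring

@[simp]
theorem weightedLaplacian_apply (w : V → V → ℝ) (f : EuclideanSpace 𝕜 V) (u : V) :
    weightedLaplacian w f u = ∑ v, (f u - f v) * (w u v : 𝕜) := rfl

theorem inner_weightedLaplacian (w : V → V → ℝ) (hw : ∀ u v, w u v = w v u)
    (f g : EuclideanSpace 𝕜 V) :
    ⟪weightedLaplacian w f, g⟫_𝕜 =
      2⁻¹ * ∑ u, ∑ v, conj (f u - f v) * (g u - g v) * (w u v : 𝕜) := by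
  have hswap : ∑ u, ∑ v, conj (f u - f v) * g u * (w u v : 𝕜) =
      -∑ u, ∑ v, conj (f u - f v) * g v * (w u v : 𝕜) := by
    rw [sum_comm, ← sum_neg_distrib]
    refine sum_congr rfl fun u _ => ?_
    rw [← sum_neg_distrib]
    refine sum_congr rfl fun v _ => ?_
    rw [hw]; simp only [map_sub]; ring
  calc ⟪weightedLaplacian w f, g⟫_𝕜 = ∑ u, ∑ v, conj (f u - f v) * g u * (w u v : 𝕜) := by
        simp only [PiLp.inner_apply, RCLike.inner_apply, weightedLaplacian_apply, map_sum,
          map_mul, RCLike.conj_ofReal, mul_sum]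
        exact sum_congr rfl fun u _ => sum_congr rfl fun v _ => by ring
    _ = 2⁻¹ * ∑ u, ∑ v, conj (f u - f v) * (g u - g v) * (w u v : 𝕜) := by
        simp only [mul_sub, sub_mul, sum_sub_distrib, hswap]
        ring

theorem isSymmetric_weightedLaplacian (w : V → V → ℝ) (hw : ∀ u v, w u v = w v u) :
    (weightedLaplacian (𝕜 := 𝕜) w).IsSymmetric := fun f g => by
  rw [← inner_conj_symm f, inner_weightedLaplacian w hw, inner_weightedLaplacian w hw]
  simp only [map_mul, map_sum, RCLike.conj_conj, RCLike.conj_ofReal, map_inv₀, map_ofNat]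
  exact congrArg _ (sum_congr rfl fun u _ => sum_congr rfl fun v _ => by ring)

theorem re_inner_weightedLaplacian_self (w : V → V → ℝ) (hw : ∀ u v, w u v = w v u)
    (f : EuclideanSpace 𝕜 V) :
    RCLike.re ⟪weightedLaplacian w f, f⟫_𝕜 = 1 / 2 * ∑ u, ∑ v, ‖f u - f v‖ ^ 2 * w u v := by
  simp only [inner_weightedLaplacian w hw, RCLike.conj_mul]
  rw [← RCLike.ofReal_re (K := 𝕜) (1 / 2 * _)]
  push_cast
  ring_nf

theorem toLp_mem_span_eigenvectors_weightedLaplacian {w : V → V → ℝ} {ω : ℝ} {f : V → 𝕜}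
    (hf : f ∈ Submodule.span 𝕜 {g : V → 𝕜 | ∃ c : ℝ, 0 ≤ c ∧ c ≤ ω ∧
      ∀ u, ∑ v, (g u - g v) * (w u v : 𝕜) = (c : 𝕜) * g u}) :
    WithLp.toLp 2 f ∈ Submodule.span 𝕜
      {y | ∃ c : ℝ, c ≤ ω ∧ weightedLaplacian w y = (c : 𝕜) • y} := by
  have hmap :=
    Submodule.mem_map_of_mem (f := (WithLp.linearEquiv 2 𝕜 (V → 𝕜)).symm.toLinearMap) hf
  rw [Submodule.map_span] at hmap
  refine Submodule.span_mono ?_ hmap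
  rintro _ ⟨g, ⟨c, -, hc, hg⟩, rfl⟩
  exact ⟨c, hc, by ext u; simpa [RCLike.real_smul_eq_coe_mul] using hg u⟩

end WeightedLaplacian

section SpectralGap

variable {𝕜 V J : Type*} [RCLike 𝕜] [Fintype V] [Fintype J]

theorem sum_inv_card_mul_norm_sum_sq_le {Ω : J → Finset V}
    (hdisj : ∀ i j, i ≠ j → Disjoint (Ω i) (Ω j)) (hcover : ∀ v, ∃ j, v ∈ Ω j) (f : V → 𝕜) :
    ∑ j, (#(Ω j) : ℝ)⁻¹ * ‖∑ v ∈ Ω j, f v‖ ^ 2 ≤ ∑ v, ‖f v‖ ^ 2 := by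
  rw [sum_eq_sum_sum_of_partition hdisj hcover]
  refine sum_le_sum fun j _ => ?_
  rw [(Ω j).sum_norm_sq_eq_inv_card_mul_norm_sum_sq_add (𝕜 := 𝕜)]
  exact le_add_of_nonneg_right (sum_nonneg fun v _ => sq_nonneg _)

theorem mul_sub_sum_inv_card_mul_norm_sum_sq_le {w : V → V → ℝ} (hw : ∀ u v, 0 ≤ w u v)
    {Ω : J → Finset V} (hdisj : ∀ i j, i ≠ j → Disjoint (Ω i) (Ω j))
    (hcover : ∀ v, ∃ j, v ∈ Ω j) {Λ : ℝ}
    (hgap : ∀ j, ∀ g : V → 𝕜, ∑ v ∈ Ω j, g v = 0 →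
      Λ * ∑ v ∈ Ω j, ‖g v‖ ^ 2 ≤ 1 / 2 * ∑ u ∈ Ω j, ∑ v ∈ Ω j, ‖g u - g v‖ ^ 2 * w u v)
    (f : V → 𝕜) :
    Λ * (∑ v, ‖f v‖ ^ 2 - ∑ j, (#(Ω j) : ℝ)⁻¹ * ‖∑ v ∈ Ω j, f v‖ ^ 2) ≤
      1 / 2 * ∑ u, ∑ v, ‖f u - f v‖ ^ 2 * w u v := by
  rw [sum_eq_sum_sum_of_partition hdisj hcover fun v => ‖f v‖ ^ 2, ← sum_sub_distrib, mul_sum,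
    sum_eq_sum_sum_of_partition hdisj hcover, mul_sum]
  refine sum_le_sum fun j _ => ?_
  calc Λ * (∑ v ∈ Ω j, ‖f v‖ ^ 2 - (#(Ω j) : ℝ)⁻¹ * ‖∑ v ∈ Ω j, f v‖ ^ 2)
      = Λ * ∑ v ∈ Ω j, ‖f v - (#(Ω j) : 𝕜)⁻¹ • ∑ u ∈ Ω j, f u‖ ^ 2 := by
        rw [(Ω j).sum_norm_sq_eq_inv_card_mul_norm_sum_sq_add (𝕜 := 𝕜), add_sub_cancel_left]
    _ ≤ 1 / 2 * ∑ u ∈ Ω j, ∑ v ∈ Ω j, ‖f u - f v‖ ^ 2 * w u v :=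
        mul_sum_norm_sq_sub_inv_card_smul_sum_le (hgap j) f
    _ ≤ 1 / 2 * ∑ u ∈ Ω j, ∑ v, ‖f u - f v‖ ^ 2 * w u v := by
        gcongr with u
        · exact fun v _ _ => mul_nonneg (sq_nonneg _) (hw u v)
        · exact subset_univ _

end SpectralGap

theorem frame_lower_bound_of_mul_sub_le {Λ ω α N A : ℝ} (hΛ : 0 < Λ) (hω : 0 ≤ ω) (hα : 0 < α)
    (hN : 0 ≤ N) (hA : 0 ≤ A) (h : Λ * (N - A) ≤ ω * N) :
    (1 - (1 + α) / α * (ω / Λ)) / (1 + α) * N ≤ A := by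
  set r := ω / Λ
  have hr : 0 ≤ r := div_nonneg hω hΛ.le
  have hAr : (1 - r) * N ≤ A := by
    have : N - A ≤ r * N := by rw [div_mul_eq_mul_div, le_div_iff₀ hΛ]; linarith
    linarith
  -- For `r ≥ 1` the coefficient is nonpositive and `0 ≤ A` suffices.
  have hcoef : (1 - (1 + α) / α * r) / (1 + α) ≤ max (1 - r) 0 := by
    have hγ : (1 + α) / α * r = r + r / α := by field_simp; ring
    have ht : 0 ≤ r / α := div_nonneg hr hα.le
    rw [div_le_iff₀ (by linarith), hγ]
    rcases le_total r 1 with h1 | h1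
    · nlinarith [le_max_left (1 - r) 0]
    · nlinarith [le_max_right (1 - r) 0]
  calc (1 - (1 + α) / α * r) / (1 + α) * N ≤ max (1 - r) 0 * N :=
        mul_le_mul_of_nonneg_right hcoef hN
    _ ≤ A := by rw [max_mul_of_nonneg _ _ hN, zero_mul]; exact max_le hAr hA

theorem stmt_12 {V : Type*} [Fintype V] {J : Type*} [Fintype J] (w : V → V → ℝ)
    (hsymm : ∀ u v, w u v = w v u) (hnn : ∀ u v, 0 ≤ w u v)
    (Ω : J → Finset V)
    (hdisj : ∀ i j, i ≠ j → Disjoint (Ω i) (Ω j)) (hcover : ∀ v : V, ∃ j, v ∈ Ω j)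
    (Λ : ℝ) (hΛ : 0 < Λ)
    (hgap : ∀ j, ∀ g : V → ℂ, ∑ v ∈ Ω j, g v = 0 →
      Λ * ∑ v ∈ Ω j, ‖g v‖ ^ 2 ≤
        1 / 2 * ∑ u ∈ Ω j, ∑ v ∈ Ω j, ‖g u - g v‖ ^ 2 * w u v)
    (ω α : ℝ) (hω : 0 < ω) (hα : 0 < α)
    (f : V → ℂ)
    (hf : f ∈ Submodule.span ℂ {g : V → ℂ | ∃ c : ℝ, 0 ≤ c ∧ c ≤ ω ∧
      ∀ v, ∑ u, (g v - g u) * (w v u : ℂ) = (c : ℂ) * g v}) :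
    ((1 - (1 + α) / α * (ω / Λ)) / (1 + α) * ∑ v, ‖f v‖ ^ 2 ≤
        ∑ j, ((Ω j).card : ℝ)⁻¹ * ‖∑ v ∈ Ω j, f v‖ ^ 2) ∧
      ∑ j, ((Ω j).card : ℝ)⁻¹ * ‖∑ v ∈ Ω j, f v‖ ^ 2 ≤ ∑ v, ‖f v‖ ^ 2 := by
  have hF := toLp_mem_span_eigenvectors_weightedLaplacian hf
  have hspec := (isSymmetric_weightedLaplacian w hsymm).re_inner_map_self_le_of_mem_span hF
  rw [re_inner_weightedLaplacian_self w hsymm, EuclideanSpace.norm_sq_eq] at hspec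
  have hgapN := mul_sub_sum_inv_card_mul_norm_sum_sq_le hnn hdisj hcover hgap f
  exact ⟨frame_lower_bound_of_mul_sub_le hΛ hω.le hα (by positivity) (by positivity)
    (hgapN.trans hspec), sum_inv_card_mul_norm_sum_sq_le hdisj hcover f⟩
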